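/- Every left strongly regular zero-symmetric unital right near-ring N is left morphic, i.e., every element a ∈ N is left morphic. -/

import Mathlib

/-- A zero-symmetric unital right near-ring: an additive group (not necessarily
abelian) and a multiplicative monoid with `1 ≠ 0`, satisfying the right
distributive law, and zero-symmetric (`x * 0 = 0`). -/
class ZSNearRing (N : Type*) extends AddGroup N, Monoid N where
  right_distrib : ∀ x y z : N, (x + y) * z = x * z + y * z
  mul_zero : ∀ x : N, x * 0 = 0
  one_ne_zero : (1 : N) ≠ (0 : N)

namespace ZSNearRing

variable {N : Type*} [ZSNearRing N]

/-- The set `Na = {n·a : n ∈ N}`. -/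
def NSet (a : N) : Set N := {x | ∃ n : N, x = n * a}

/-- The left annihilator `(0 :ₗ a) = {x ∈ N : x·a = 0}`. -/
def lAnn (a : N) : Set N := {x | x * a = 0}

/-- `a` is left morphic if there is `b` with `Na = (0 :ₗ b)` and `Nb = (0 :ₗ a)`. -/
def IsLeftMorphic (a : N) : Prop := ∃ b : N, NSet a = lAnn b ∧ NSet b = lAnn a

end ZSNearRing

open ZSNearRing

/-
In a left strongly regular near-ring, `a = x a²` forces `a² = 0 → a = 0`, and in such a reduced
near-ring `st = 0` implies `ts = 0` and `s n t = 0`. With `e = x a` one gets `ae = a`, so `e` is an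
idempotent with `Ne = Na` and `(0 :ₗ e) = (0 :ₗ a)`. An idempotent `e` is left morphic with
witness `f = -e + 1`: `e` and `f` are orthogonal idempotents, and `te = tf = 0` forces
`t = (e + f) t = 0`, which gives `(0 :ₗ f) = Ne` and `(0 :ₗ e) = Nf`.
-/

namespace ZSNearRing

variable {N : Type*} [ZSNearRing N]

theorem zero_mul' (a : N) : 0 * a = 0 := by
  have h := right_distrib (0 : N) 0 a
  rwa [add_zero, right_eq_add] at h

theorem neg_mul' (a b : N) : -a * b = -(a * b) := by
  have h := right_distrib a (-a) b
  rw [add_neg_cancel, zero_mul'] at h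
  exact eq_neg_of_add_eq_zero_right h.symm

theorem sub_mul' (a b c : N) : (a - b) * c = a * c - b * c := by
  rw [sub_eq_add_neg, right_distrib, neg_mul', ← sub_eq_add_neg]

theorem mem_NSet_iff_of_isIdempotentElem {e : N} (he : IsIdempotentElem e) (y : N) :
    y ∈ NSet e ↔ y * e = y := by
  constructor
  · rintro ⟨n, rfl⟩
    rw [mul_assoc, he.eq]
  · exact fun h => ⟨y, h.symm⟩

theorem lAnn_eq_NSet {e f : N} (he : IsIdempotentElem e) (hef : e * f = 0)
    (hsep : ∀ t : N, t * e = 0 → t * f = 0 → t = 0) : lAnn f = NSet e := by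
  ext y
  rw [mem_NSet_iff_of_isIdempotentElem he]
  constructor
  · intro hyf
    refine (sub_eq_zero.mp (hsep _ ?_ ?_)).symm
    · rw [sub_mul', mul_assoc, he.eq, sub_self]
    · rw [sub_mul', mul_assoc, hef, mul_zero, hyf, sub_self]
  · intro hye
    change y * f = 0
    rw [← hye, mul_assoc, hef, mul_zero]

section Reduced

variable {s t : N}

theorem mul_eq_zero_symm (hred : ∀ a : N, a * a = 0 → a = 0) (h : s * t = 0) : t * s = 0 :=
  hred _ <| by rw [mul_assoc, ← mul_assoc s, h, zero_mul', mul_zero]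

theorem mul_mul_eq_zero_of_mul_eq_zero (hred : ∀ a : N, a * a = 0 → a = 0) (h : s * t = 0)
    (n : N) : s * (n * t) = 0 :=
  hred _ <| calc
    s * (n * t) * (s * (n * t)) = s * (n * ((t * s) * (n * t))) := by simp only [mul_assoc]
    _ = 0 := by rw [mul_eq_zero_symm hred h, zero_mul', mul_zero, mul_zero]

theorem isLeftMorphic_of_isIdempotentElem (hred : ∀ a : N, a * a = 0 → a = 0) {e : N}
    (he : IsIdempotentElem e) : IsLeftMorphic e := by
  set f := -e + 1 with hf_def
  have hfe : f * e = 0 := by rw [right_distrib, neg_mul', one_mul, he.eq, neg_add_cancel]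
  have hef : e * f = 0 := by
    simpa only [← mul_assoc, he.eq] using
      mul_eq_zero_symm hred (show e * f * e = 0 by rw [mul_assoc, hfe, mul_zero])
  have hf : IsIdempotentElem f := by
    change f * f = f
    rw [hf_def, right_distrib, neg_mul', one_mul, ← hf_def, hef, neg_zero, zero_add]
  have hsep : ∀ t : N, t * e = 0 → t * f = 0 → t = 0 := by
    intro t hte htf
    have h : (e + f) * t = 0 := by
      rw [right_distrib, mul_eq_zero_symm hred hte, mul_eq_zero_symm hred htf, add_zero]
    rwa [hf_def, add_neg_cancel_left, one_mul] at h
  exact ⟨f, (lAnn_eq_NSet he hef hsep).symm,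
    (lAnn_eq_NSet hf hfe fun t htf hte => hsep t hte htf).symm⟩

end Reduced

theorem eq_zero_of_mul_self_eq_zero (hsr : ∀ a : N, ∃ x : N, a = x * (a * a)) :
    ∀ a : N, a * a = 0 → a = 0 := by
  intro a h
  obtain ⟨x, hx⟩ := hsr a
  rwa [h, mul_zero] at hx

theorem exists_isIdempotentElem_NSet_eq_lAnn_eq (hsr : ∀ a : N, ∃ x : N, a = x * (a * a))
    (a : N) :
    ∃ e : N, IsIdempotentElem e ∧ NSet a = NSet e ∧ lAnn a = lAnn e := by
  have hred := eq_zero_of_mul_self_eq_zero hsr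
  obtain ⟨x, hx⟩ := hsr a
  set e := x * a with he_def
  have hea : e * a = a := by rw [mul_assoc, ← hx]
  have hae : a * e = a := by
    have hca : (a - a * e) * a = 0 := by rw [sub_mul', mul_assoc, hea, sub_self]
    have hac : a * (a - a * e) = 0 := mul_eq_zero_symm hred hca
    refine (sub_eq_zero.mp (hred _ ?_)).symm
    rw [sub_mul', hac, mul_assoc, mul_assoc, ← mul_assoc a, hac, mul_zero, sub_zero]
  have he : IsIdempotentElem e := by
    change x * a * (x * a) = x * a
    rw [← he_def, mul_assoc, hae]
  refine ⟨e, he, Set.ext fun y => ?_, Set.ext fun y => ?_⟩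
  · rw [mem_NSet_iff_of_isIdempotentElem he]
    constructor
    · rintro ⟨n, rfl⟩
      rw [mul_assoc, hae]
    · exact fun hye => ⟨y * x, by rw [mul_assoc]; exact hye.symm⟩
  · constructor
    · exact fun hya => mul_mul_eq_zero_of_mul_eq_zero hred hya x
    · intro hye
      change y * a = 0
      rw [← hea, ← mul_assoc, hye, zero_mul']

end ZSNearRing

theorem stmt7 {N : Type*} [ZSNearRing N]
    (hsr : ∀ a : N, ∃ x : N, a = x * (a * a)) :
    ∀ a : N, IsLeftMorphic a := by
  intro a
  obtain ⟨e, he, hNSet, hlAnn⟩ := exists_isIdempotentElem_NSet_eq_lAnn_eq hsr a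
  obtain ⟨f, hef, hfe⟩ := isLeftMorphic_of_isIdempotentElem (eq_zero_of_mul_self_eq_zero hsr) he
  exact ⟨f, hNSet.trans hef, hfe.trans hlAnn.symm⟩
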